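/- arXiv:2208.02107 — 4 statements merged into one kernel-verified Lean document; each statement's English description precedes it below -/
import Mathlib

section
/- Let p be a real number with 1 ≤ p, let f₁, f₂, g : ℤ^d → ℝ, and assume B is nonempty. Then ( ∑_{r ∈ R} | (f₁ ∗ g)(r) − (f₂ ∗ g)(r) |^p )^{1/p} ≤ ( ∑_{b ∈ B} |g(b)| ) · ( ∑_{q ∈ P} |f₁(q) − f₂(q)|^p )^{1/p} ≤ |B| · ( max_{b ∈ B} |g(b)| ) · ( ∑_{q ∈ P} |f₁(q) − f₂(q)|^p )^{1/p}, where |B| denotes the cardinality of B. (This is the ℓ^p-norm inequality, a strided discrete Young inequality, underlying the paper's stability result for image convolutional persistence.) -/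
/-!
By linearity, `f₁ ∗ g - f₂ ∗ g = (f₁ - f₂) ∗ g`. Minkowski's inequality bounds the `ℓ^p(R)` norm of
`f ∗ g = ∑_b g(b) · f(b + · ⊙ k)` by `∑_b |g(b)| · ‖f(b + · ⊙ k)‖_{ℓ^p(R)}`, and since the strides
are nonzero, `r ↦ b + r ⊙ k` maps `R` injectively into `P`, so each translate has norm at most
`‖f‖_{ℓ^p(P)}`. The second inequality is `∑_b |g(b)| ≤ |B| · max_b |g(b)|`.
-/

open Finset

/-- The strided discrete convolution of `f : ℤ^d → ℝ` with a filter `g`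
supported on the finite set `B`, with stride vector `k`:
`(f ∗ g)(r) = ∑_{b ∈ B} g(b) · f(b + r ⊙ k)`. -/
noncomputable def stridedConv {d : ℕ} (B : Finset (Fin d → ℤ)) (k : Fin d → ℤ)
    (f g : (Fin d → ℤ) → ℝ) (r : Fin d → ℤ) : ℝ :=
  ∑ b ∈ B, g b * f (b + fun i => r i * k i)

theorem Real.Lp_sum_le {ι κ : Type*} (s : Finset ι) (t : Finset κ) (F : κ → ι → ℝ)
    {p : ℝ} (hp : 1 ≤ p) :
    (∑ i ∈ s, |∑ j ∈ t, F j i| ^ p) ^ (1 / p) ≤ ∑ j ∈ t, (∑ i ∈ s, |F j i| ^ p) ^ (1 / p) := by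
  classical
  induction t using Finset.cons_induction with
  | empty =>
    simp [Real.zero_rpow (by positivity : p ≠ 0), Real.zero_rpow (by positivity : p⁻¹ ≠ 0)]
  | cons j t hj ih =>
    simp only [sum_cons]
    exact (Real.Lp_add_le s (F j) (fun i => ∑ j ∈ t, F j i) hp).trans (add_le_add_right ih _)

theorem Real.Lp_const_mul {ι : Type*} (s : Finset ι) (c : ℝ) (f : ι → ℝ) {p : ℝ} (hp : p ≠ 0) :
    (∑ i ∈ s, |c * f i| ^ p) ^ (1 / p) = |c| * (∑ i ∈ s, |f i| ^ p) ^ (1 / p) := by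
  simp_rw [abs_mul, Real.mul_rpow (abs_nonneg c) (abs_nonneg _), ← mul_sum]
  rw [Real.mul_rpow (by positivity) (sum_nonneg fun _ _ => by positivity),
    ← Real.rpow_mul (abs_nonneg c), mul_one_div_cancel hp, Real.rpow_one]

theorem Finset.sum_comp_le_of_injOn {ι κ M : Type*} [AddCommMonoid M] [PartialOrder M]
    [IsOrderedAddMonoid M] {s : Finset ι} {t : Finset κ} {e : ι → κ} (he : Set.InjOn e s)
    (hst : ∀ i ∈ s, e i ∈ t) {f : κ → M} (hf : ∀ j ∈ t, 0 ≤ f j) :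
    ∑ i ∈ s, f (e i) ≤ ∑ j ∈ t, f j := by
  classical
  rw [← sum_image he]
  exact sum_le_sum_of_subset_of_nonneg (image_subset_iff.2 hst) fun j hj _ => hf j hj

theorem add_hadamard_injective {ι α : Type*} [Ring α] [NoZeroDivisors α] (b k : ι → α)
    (hk : ∀ i, k i ≠ 0) : Function.Injective fun r : ι → α => b + fun i => r i * k i := by
  intro r r' h
  funext i
  exact mul_right_cancel₀ (hk i) (add_left_cancel (congrFun h i))

theorem stridedConv_sub {d : ℕ} (B : Finset (Fin d → ℤ)) (k : Fin d → ℤ)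
    (f₁ f₂ g : (Fin d → ℤ) → ℝ) (r : Fin d → ℤ) :
    stridedConv B k f₁ g r - stridedConv B k f₂ g r = stridedConv B k (f₁ - f₂) g r := by
  simp only [stridedConv, ← sum_sub_distrib, Pi.sub_apply, mul_sub]

theorem stridedConv_Lp_le {d : ℕ} {P B R : Finset (Fin d → ℤ)} {k : Fin d → ℤ}
    (hk : ∀ i, k i ≠ 0) (hBRP : ∀ b ∈ B, ∀ r ∈ R, (b + fun i => r i * k i) ∈ P)
    {p : ℝ} (hp : 1 ≤ p) (f g : (Fin d → ℤ) → ℝ) :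
    (∑ r ∈ R, |stridedConv B k f g r| ^ p) ^ (1 / p) ≤
      (∑ b ∈ B, |g b|) * (∑ q ∈ P, |f q| ^ p) ^ (1 / p) := by
  have hp0 : 0 < p := zero_lt_one.trans_le hp
  have translate_le (b : Fin d → ℤ) (hb : b ∈ B) :
      (∑ r ∈ R, |f (b + fun i => r i * k i)| ^ p) ^ (1 / p) ≤ (∑ q ∈ P, |f q| ^ p) ^ (1 / p) :=
    Real.rpow_le_rpow (sum_nonneg fun _ _ => by positivity)
      (sum_comp_le_of_injOn (add_hadamard_injective b k hk).injOn (hBRP b hb)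
        (f := fun q => |f q| ^ p) fun _ _ => by positivity)
      (by positivity)
  calc (∑ r ∈ R, |stridedConv B k f g r| ^ p) ^ (1 / p)
      ≤ ∑ b ∈ B, (∑ r ∈ R, |g b * f (b + fun i => r i * k i)| ^ p) ^ (1 / p) :=
        Real.Lp_sum_le R B _ hp
    _ = ∑ b ∈ B, |g b| * (∑ r ∈ R, |f (b + fun i => r i * k i)| ^ p) ^ (1 / p) := by
        simp_rw [Real.Lp_const_mul _ _ _ hp0.ne']
    _ ≤ ∑ b ∈ B, |g b| * (∑ q ∈ P, |f q| ^ p) ^ (1 / p) :=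
        sum_le_sum fun b hb => mul_le_mul_of_nonneg_left (translate_le b hb) (abs_nonneg _)
    _ = (∑ b ∈ B, |g b|) * (∑ q ∈ P, |f q| ^ p) ^ (1 / p) := (sum_mul ..).symm

theorem stridedConv_lp_stability_general {d : ℕ}
    (P B R : Finset (Fin d → ℤ)) (k : Fin d → ℤ) (hk : ∀ i, 1 ≤ k i)
    (hBRP : ∀ b ∈ B, ∀ r ∈ R, (b + fun i => r i * k i) ∈ P)
    (p : ℝ) (hp : 1 ≤ p) (f₁ f₂ g : (Fin d → ℤ) → ℝ) (hB : B.Nonempty) :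
    (∑ r ∈ R, |stridedConv B k f₁ g r - stridedConv B k f₂ g r| ^ p) ^ (1 / p) ≤
        (∑ b ∈ B, |g b|) * (∑ q ∈ P, |f₁ q - f₂ q| ^ p) ^ (1 / p) ∧
      (∑ b ∈ B, |g b|) * (∑ q ∈ P, |f₁ q - f₂ q| ^ p) ^ (1 / p) ≤
        (B.card : ℝ) * (B.sup' hB fun b => |g b|) *
          (∑ q ∈ P, |f₁ q - f₂ q| ^ p) ^ (1 / p) := by
  have hk0 (i : Fin d) : k i ≠ 0 := (zero_lt_one.trans_le (hk i)).ne'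
  refine ⟨?_, mul_le_mul_of_nonneg_right ?_ (by positivity)⟩
  · simpa only [stridedConv_sub, Pi.sub_apply] using stridedConv_Lp_le hk0 hBRP hp (f₁ - f₂) g
  · calc ∑ b ∈ B, |g b| ≤ B.card • B.sup' hB (fun b => |g b|) :=
          sum_le_card_nsmul _ _ _ fun b hb => le_sup' (fun b => |g b|) hb
      _ = (B.card : ℝ) * B.sup' hB (fun b => |g b|) := nsmul_eq_mul _ _

/-- The strided discrete Young inequality: for `1 ≤ p`,
`‖f₁ ∗ g − f₂ ∗ g‖_{ℓ^p(R)} ≤ ‖g‖_{ℓ^1(B)} · ‖f₁ − f₂‖_{ℓ^p(P)}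
  ≤ |B| · ‖g‖_{ℓ^∞(B)} · ‖f₁ − f₂‖_{ℓ^p(P)}`. -/
theorem stridedConv_lp_stability {d : ℕ} (hd : 1 ≤ d)
    (P B R : Finset (Fin d → ℤ)) (k : Fin d → ℤ) (hk : ∀ i, 1 ≤ k i)
    (hBRP : ∀ b ∈ B, ∀ r ∈ R, (b + fun i => r i * k i) ∈ P)
    (p : ℝ) (hp : 1 ≤ p) (f₁ f₂ g : (Fin d → ℤ) → ℝ) (hB : B.Nonempty) :
    (∑ r ∈ R, |stridedConv B k f₁ g r - stridedConv B k f₂ g r| ^ p) ^ (1 / p) ≤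
        (∑ b ∈ B, |g b|) * (∑ q ∈ P, |f₁ q - f₂ q| ^ p) ^ (1 / p) ∧
      (∑ b ∈ B, |g b|) * (∑ q ∈ P, |f₁ q - f₂ q| ^ p) ^ (1 / p) ≤
        (B.card : ℝ) * (B.sup' hB fun b => |g b|) *
          (∑ q ∈ P, |f₁ q - f₂ q| ^ p) ^ (1 / p) :=
  stridedConv_lp_stability_general P B R k hk hBRP p hp f₁ f₂ g hB
end

section
/- Let m, M be natural numbers with M ≥ 2m + 1, and let S be a finite set of points in ℝ^M in general position, i.e. every subset of S with at most M + 1 elements is affinely independent. Let σ₁, σ₂ ⊆ S with |σ₁| ≤ m + 1 and |σ₂| ≤ m + 1. Then convexHull(σ₁) ∩ convexHull(σ₂) = convexHull(σ₁ ∩ σ₂). (This expresses the injectivity of the piecewise-linear extension of a general-position embedding of the vertex set of an m-dimensional simplicial complex into ℝ^M: simplices of the geometric realization, which are convex hulls of at most m + 1 embedded vertices, intersect exactly in the simplex spanned by their common vertices.) -/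
/-- If `S ⊆ ℝ^M` is a finite set in general position (every
subset of at most `M + 1` points is affinely independent), `M ≥ 2m + 1`, and
`σ₁, σ₂ ⊆ S` have at most `m + 1` elements (simplices of an `m`-dimensional
simplicial complex), then `convexHull σ₁ ∩ convexHull σ₂ = convexHull (σ₁ ∩ σ₂)`. -/
theorem simplicial_genpos_convexHull_inter {m M : ℕ} (hM : 2 * m + 1 ≤ M)
    (S : Finset (Fin M → ℝ))
    (hS : ∀ T : Finset (Fin M → ℝ), T ⊆ S → T.card ≤ M + 1 →
      AffineIndependent ℝ ((↑) : T → (Fin M → ℝ)))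
    (σ₁ σ₂ : Finset (Fin M → ℝ)) (h₁ : σ₁ ⊆ S) (h₂ : σ₂ ⊆ S)
    (hc₁ : σ₁.card ≤ m + 1) (hc₂ : σ₂.card ≤ m + 1) :
    convexHull ℝ (σ₁ : Set (Fin M → ℝ)) ∩ convexHull ℝ (σ₂ : Set (Fin M → ℝ)) =
      convexHull ℝ ((σ₁ ∩ σ₂ : Finset (Fin M → ℝ)) : Set (Fin M → ℝ)) := by
  have hcard : (σ₁ ∪ σ₂).card ≤ M + 1 := (Finset.card_union_le σ₁ σ₂).trans (by omega)
  have hindep := hS (σ₁ ∪ σ₂) (Finset.union_subset h₁ h₂) hcard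
  rw [Finset.coe_inter, hindep.convexHull_inter']
end

section
/- Let d, n ≥ 1 and m ≥ 0. Let k ∈ ℤ^d be a stride vector with k i ≥ 1 for every coordinate i, set κ = ∏_i k i, and let B* = { b ∈ ℤ^d : 0 ≤ b i < k i for all i } (so |B*| = κ). Let B and P be finite subsets of ℤ^d with B* ⊆ B, and let R be a finite subset of ℤ^d such that b + r ⊙ k ∈ P for all b ∈ B and r ∈ R. Assume n·κ ≥ 2^{m+1} − 1. For f : P → ℝ^n (an element of the finite-dimensional real vector space of functions P → ℝ^n with its Euclidean topology), define the patch map ι_f : R → (B → ℝ^n) by ι_f(r)(b) = f(b + r ⊙ k). Then the set of f such that for every subset T ⊆ R with |T| ≤ 2^{m+1} the family (ι_f(r))_{r ∈ T} is affinely independent in the real vector space B → ℝ^n is open and dense in the space of functions P → ℝ^n. -/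
open Matrix Polynomial

section Aux

variable {E : Type*} [NormedAddCommGroup E] [InnerProductSpace ℝ E]
variable {ι : Type*} [Fintype ι] [DecidableEq ι]



theorem gram_det_ne_zero_iff (v : ι → E) :
    (Matrix.of fun i j => (inner ℝ (v i) (v j) : ℝ)).det ≠ 0 ↔ LinearIndependent ℝ v := by
  set G : Matrix ι ι ℝ := Matrix.of fun i j => (inner ℝ (v i) (v j) : ℝ) with hG
  constructor
  · intro hdet
    rw [Fintype.linearIndependent_iff]
    intro c hc i
    have hv : G.vecMul c = 0 := by
      funext j
      have : (inner ℝ (∑ i, c i • v i) (v j) : ℝ) = 0 := by rw [hc, inner_zero_left]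
      simpa [Matrix.vecMul, dotProduct, hG, sum_inner, real_inner_smul_left] using this
    have hinj : Function.Injective fun c => Matrix.vecMul c G :=
      Matrix.vecMul_injective_iff_isUnit.2 ((Matrix.isUnit_iff_isUnit_det G).2 hdet.isUnit)
    have := hinj (a₁ := c) (a₂ := 0) (by simpa using hv)
    simpa using congrFun this i
  · intro hli
    have key : ∀ a : ι → ℝ, G.mulVec a = 0 → a = 0 := by
      intro a ha
      have h0 : (inner ℝ (∑ i, a i • v i) (∑ j, a j • v j) : ℝ) = 0 := by
        rw [sum_inner]
        refine Finset.sum_eq_zero fun i _ => ?_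
        rw [real_inner_smul_left, inner_sum]
        have : ∑ j, (inner ℝ (v i) (a j • v j) : ℝ) = G.mulVec a i := by
          simp [Matrix.mulVec, dotProduct, hG, real_inner_smul_right, mul_comm]
        rw [this, ha]
        simp
      have hsum : ∑ i, a i • v i = 0 := by
        have := inner_self_eq_zero (𝕜 := ℝ).1 h0
        exact this
      funext i
      exact Fintype.linearIndependent_iff.1 hli a hsum i
    have hinj : Function.Injective G.mulVec := by
      intro c c' h
      have : G.mulVec (c - c') = 0 := by
        rw [Matrix.mulVec_sub, h, sub_self]
      have := key _ this
      exact sub_eq_zero.1 this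
    exact (Matrix.isUnit_iff_isUnit_det G).1 (Matrix.mulVec_injective_iff_isUnit.1 hinj) |>.ne_zero

theorem dense_setOf_affineIndependent_inner [FiniteDimensional ℝ E]
    (h : Fintype.card ι ≤ Module.finrank ℝ E + 1) :
    Dense {p : ι → E | AffineIndependent ℝ p} := by
  classical
  rcases subsingleton_or_nontrivial ι with hs | hs
  · have : {p : ι → E | AffineIndependent ℝ p} = Set.univ :=
      Set.eq_univ_of_forall fun p => affineIndependent_of_subsingleton ℝ p
    rw [this]; exact dense_univ
  · obtain ⟨i0⟩ : Nonempty ι := inferInstance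
    obtain ⟨bA⟩ := AffineBasis.exists_affineBasis_of_finiteDimensional
      (ι := Fin (Module.finrank ℝ E + 1)) (k := ℝ) (P := E) (by simp)
    obtain ⟨emb⟩ := Function.Embedding.nonempty_of_card_le
      (α := ι) (β := Fin (Module.finrank ℝ E + 1)) (by simpa using h)
    set q : ι → E := bA ∘ emb with hqdef
    have hq : AffineIndependent ℝ q := bA.ind.comp_embedding emb
    rw [Metric.dense_iff]
    intro p ε hε
    set u : {i // i ≠ i0} → E := fun i => p i - p i0 with hu
    set w : {i // i ≠ i0} → E := fun i => (q i - p i) - (q i0 - p i0) with hw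
    set Mp : Matrix {i // i ≠ i0} {i // i ≠ i0} ℝ[X] := Matrix.of fun i j =>
      C (inner ℝ (u i) (u j) : ℝ) + (C (inner ℝ (u i) (w j) : ℝ) + C (inner ℝ (w i) (u j) : ℝ)) * X
        + C (inner ℝ (w i) (w j) : ℝ) * X ^ 2 with hMp
    have hdet : ∀ t : ℝ, Polynomial.eval t Mp.det
        = (Matrix.of fun i j => (inner ℝ (u i + t • w i) (u j + t • w j) : ℝ)).det := by
      intro t
      have h1 : (Polynomial.evalRingHom t) Mp.det
          = ((Polynomial.evalRingHom t).mapMatrix Mp).det := RingHom.map_det _ _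
      have h2 : (Polynomial.evalRingHom t).mapMatrix Mp
          = Matrix.of fun i j => (inner ℝ (u i + t • w i) (u j + t • w j) : ℝ) := by
        ext i j
        simp [hMp, RingHom.mapMatrix_apply, Matrix.map_apply, inner_add_left, inner_add_right,
          real_inner_smul_left, real_inner_smul_right]
        ring
      simpa [h2] using h1
    have hMpne : Mp.det ≠ 0 := by
      intro h0
      have h1 : Polynomial.eval 1 Mp.det ≠ 0 := by
        rw [hdet 1]
        have hvs : (fun i : {i // i ≠ i0} => u i + (1:ℝ) • w i)
            = fun i : {i // i ≠ i0} => q (i : ι) - q i0 := by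
          funext i; simp [hu, hw]; abel
        rw [show (Matrix.of fun i j => (inner ℝ (u i + (1:ℝ) • w i) (u j + (1:ℝ) • w j) : ℝ))
            = Matrix.of fun i j : {i // i ≠ i0} => (inner ℝ (q (i:ι) - q i0) (q (j:ι) - q i0) : ℝ) by
          ext i j; simp only [Matrix.of_apply]; rw [congrFun hvs i, congrFun hvs j]]
        exact (gram_det_ne_zero_iff _).2 (by
          simpa [vsub_eq_sub] using (affineIndependent_iff_linearIndependent_vsub ℝ q i0).1 hq)
      exact h1 (by rw [h0]; simp)
    -- continuity of the path
    have hc : Continuous fun t : ℝ => (fun i => p i + t • (q i - p i) : ι → E) := by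
      exact continuous_pi fun i => continuous_const.add ((continuous_id.smul continuous_const))
    have h0 : (fun i => p i + (0:ℝ) • (q i - p i)) = p := by funext i; simp
    have := Metric.tendsto_nhds.1 (hc.tendsto 0) ε hε
    rw [Metric.eventually_nhds_iff] at this
    obtain ⟨δ, hδ, hball⟩ := this
    have hfin := Polynomial.finite_setOf_isRoot hMpne
    have hinf : (Set.Ioo (0:ℝ) δ).Infinite := Set.Ioo_infinite hδ
    obtain ⟨t, ht⟩ := (hinf.diff hfin).nonempty
    obtain ⟨⟨ht0, htδ⟩, htroot⟩ := ht
    refine ⟨fun i => p i + t • (q i - p i), ?_, ?_⟩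
    · have : dist (0:ℝ) t < δ := by simp [abs_of_pos ht0, dist_comm]; exact htδ
      have := hball (y := t) (by simpa [dist_comm] using this)
      simpa [h0, Metric.mem_ball] using this
    · show AffineIndependent ℝ (fun i => p i + t • (q i - p i))
      rw [affineIndependent_iff_linearIndependent_vsub ℝ _ i0]
      have hvec : (fun i : {i // i ≠ i0} => (p i + t • (q i - p i)) -ᵥ (p i0 + t • (q i0 - p i0)))
          = fun i => u i + t • w i := by
        funext i
        simp [vsub_eq_sub, hu, hw, smul_sub]
        abel
      rw [hvec]
      refine (gram_det_ne_zero_iff _).1 ?_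
      rw [← hdet t]
      exact htroot

end Aux

theorem dense_setOf_affineIndependent' {E : Type*} [NormedAddCommGroup E]
    [NormedSpace ℝ E] [FiniteDimensional ℝ E] {ι : Type*} [Fintype ι]
    (h : Fintype.card ι ≤ Module.finrank ℝ E + 1) :
    Dense {p : ι → E | AffineIndependent ℝ p} := by
  classical
  set e := toEuclidean (E := E) with he
  set Φ : (ι → E) ≃ₜ (ι → EuclideanSpace ℝ (Fin (Module.finrank ℝ E))) :=
    Homeomorph.piCongrRight fun _ => e.toHomeomorph with hΦ
  have hΦapp : ∀ p : ι → E, Φ p = fun i => e (p i) := fun p => rfl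
  have key : ∀ p : ι → E, AffineIndependent ℝ (fun i => e (p i)) ↔ AffineIndependent ℝ p := by
    intro p
    constructor
    · intro hp
      exact AffineIndependent.of_comp (e.toLinearEquiv.toLinearMap.toAffineMap) hp
    · intro hp
      refine AffineIndependent.of_comp (e.symm.toLinearEquiv.toLinearMap.toAffineMap) ?_
      have : (⇑(e.symm.toLinearEquiv.toLinearMap.toAffineMap) ∘ fun i => e (p i)) = p := by
        funext i
        exact e.symm_apply_apply _
      rw [this]; exact hp
  have hset : {p : ι → E | AffineIndependent ℝ p}
      = Φ ⁻¹' {p | AffineIndependent ℝ p} := by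
    ext p
    simp only [Set.mem_setOf_eq, Set.mem_preimage, hΦapp]
    exact (key p).symm
  rw [hset]
  have hd : Dense {p : ι → EuclideanSpace ℝ (Fin (Module.finrank ℝ E)) | AffineIndependent ℝ p} :=
    dense_setOf_affineIndependent_inner (by simpa using h)
  rw [dense_iff_closure_eq] at hd ⊢
  rw [← Φ.preimage_closure, hd, Set.preimage_univ]

theorem isOpen_setOf_affineIndependent' {E : Type*} [NormedAddCommGroup E]
    [NormedSpace ℝ E] {ι : Type*} [Finite ι] :
    IsOpen {p : ι → E | AffineIndependent ℝ p} := by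
  classical
  rcases isEmpty_or_nonempty ι with h | h
  · have : {p : ι → E | AffineIndependent ℝ p} = Set.univ :=
      Set.eq_univ_of_forall fun p => affineIndependent_of_subsingleton ℝ p
    rw [this]; exact isOpen_univ
  · obtain ⟨i0⟩ := h
    have hset : {p : ι → E | AffineIndependent ℝ p}
        = (fun p : ι → E => fun i : {x // x ≠ i0} => p i - p i0) ⁻¹'
          {v : {x // x ≠ i0} → E | LinearIndependent ℝ v} := by
      ext p
      simpa [vsub_eq_sub] using affineIndependent_iff_linearIndependent_vsub ℝ p i0
    rw [hset]
    exact (isOpen_setOf_linearIndependent (𝕜 := ℝ) (E := E)).preimage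
      (show Continuous fun p : ι → E => fun i : {x // x ≠ i0} => p (i : ι) - p i0 from
        continuous_pi fun i => (continuous_apply (i : ι)).sub (continuous_apply i0))

/-- The set of data functions `f : P → ℝ^n` whose patch map
`ι_f : R → (B → ℝ^n)`, `ι_f r b = f (b + r ⊙ k)`, sends every subset
`T ⊆ R` with `|T| ≤ 2^(m+1)` to an affinely independent family in `B → ℝ^n`. -/
def goodPatchFns {d n : ℕ} (m : ℕ) (k : Fin d → ℤ)
    (B P R : Finset (Fin d → ℤ))
    (hBRP : ∀ b ∈ B, ∀ r ∈ R, (b + fun i => r i * k i) ∈ P) :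
    Set (P → Fin n → ℝ) :=
  {f | ∀ (T : Finset (Fin d → ℤ)) (hT : T ⊆ R), T.card ≤ 2 ^ (m + 1) →
    AffineIndependent ℝ (fun r : T => fun b : B =>
      f ⟨(b : Fin d → ℤ) + fun i => (r : Fin d → ℤ) i * k i,
        hBRP b b.2 r (hT r.2)⟩)}

/-- With stride `k` (`k i ≥ 1`), `κ = ∏ i, k i`, corner
block `B* ⊆ B`, window `B`, image domain `P`, convolution domain `R`
(`b + r ⊙ k ∈ P` for `b ∈ B`, `r ∈ R`), and `n·κ ≥ 2^(m+1) − 1`, the set of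
`f : P → ℝ^n` whose patch map sends every subset of `R` of size at most
`2^(m+1)` to an affinely independent family is open and dense in the space of
all functions `P → ℝ^n`: generically, the interpolated patch embedding is
injective on the `m`-skeleton of the cubical complex on `R`. -/
theorem generic_patch_embedding {d n m : ℕ} (hd : 1 ≤ d) (hn : 1 ≤ n)
    (k : Fin d → ℤ) (hk : ∀ i, 1 ≤ k i)
    (B P R : Finset (Fin d → ℤ))
    (hBstar : ∀ b : Fin d → ℤ, (∀ i, 0 ≤ b i ∧ b i < k i) → b ∈ B)
    (hBRP : ∀ b ∈ B, ∀ r ∈ R, (b + fun i => r i * k i) ∈ P)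
    (hκ : (2 : ℤ) ^ (m + 1) - 1 ≤ (n : ℤ) * ∏ i, k i) :
    IsOpen (goodPatchFns (n := n) m k B P R hBRP) ∧
      Dense (goodPatchFns (n := n) m k B P R hBRP) := by
  classical
  -- the corner block
  set Bs : Finset (Fin d → ℤ) := Fintype.piFinset fun i => Finset.Ico 0 (k i) with hBs
  have hmemBs : ∀ b : Fin d → ℤ, b ∈ Bs ↔ ∀ i, 0 ≤ b i ∧ b i < k i := by
    intro b
    simp [hBs, Fintype.mem_piFinset, Finset.mem_Ico]
  have hBsB : ∀ b ∈ Bs, b ∈ B := fun b hb => hBstar b ((hmemBs b).1 hb)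
  -- cardinality of the corner block
  have hcardBs : Bs.card = ∏ i, (k i).toNat := by
    rw [hBs, Fintype.card_piFinset]
    congr 1; funext i; simp
  -- the key injectivity
  have inj : ∀ b₁ ∈ Bs, ∀ b₂ ∈ Bs, ∀ r₁ r₂ : Fin d → ℤ,
      (b₁ + fun i => r₁ i * k i) = (b₂ + fun i => r₂ i * k i) → b₁ = b₂ ∧ r₁ = r₂ := by
    intro b₁ hb₁ b₂ hb₂ r₁ r₂ h
    rw [hmemBs] at hb₁ hb₂
    have key : ∀ i, b₁ i = b₂ i ∧ r₁ i = r₂ i := by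
      intro i
      have hi := congrFun h i
      simp only [Pi.add_apply] at hi
      have h₁ : (b₁ i + k i * r₁ i) % k i = b₁ i := by
        rw [Int.add_mul_emod_self_left, Int.emod_eq_of_lt (hb₁ i).1 (hb₁ i).2]
      have h₂ : (b₂ i + k i * r₂ i) % k i = b₂ i := by
        rw [Int.add_mul_emod_self_left, Int.emod_eq_of_lt (hb₂ i).1 (hb₂ i).2]
      have hb : b₁ i = b₂ i := by
        rw [← h₁, ← h₂, mul_comm (k i) (r₁ i), mul_comm (k i) (r₂ i), hi]
      refine ⟨hb, ?_⟩
      have h3 : r₁ i * k i = r₂ i * k i := by rw [hb] at hi; linarith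
      exact mul_right_cancel₀ (by linarith [hk i] : k i ≠ 0) h3
    exact ⟨funext fun i => (key i).1, funext fun i => (key i).2⟩
  -- dimension bound
  have hdim : 2 ^ (m + 1) ≤ Bs.card * n + 1 := by
    have h1 : (∏ i, k i) = ((∏ i, (k i).toNat : ℕ) : ℤ) := by
      push_cast
      exact Finset.prod_congr rfl fun i _ => (Int.toNat_of_nonneg (by linarith [hk i])).symm
    have h2 : (2 : ℤ) ^ (m + 1) ≤ ((∏ i, (k i).toNat) * n + 1 : ℕ) := by
      push_cast
      rw [h1] at hκ
      push_cast at hκ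
      linarith
    rw [hcardBs]
    exact_mod_cast h2
  -- the target configuration space
  have hrankE' : Module.finrank ℝ ({x // x ∈ Bs} → Fin n → ℝ) = Bs.card * n := by
    rw [Module.finrank_pi_fintype ℝ]
    simp [Module.finrank_pi, Fintype.card_coe, Finset.sum_const, smul_eq_mul]
  -- family of good sets
  set A' : Finset (Fin d → ℤ) → Set ({x // x ∈ P} → Fin n → ℝ) := fun T =>
    if h : T ⊆ R then
      {f | AffineIndependent ℝ (fun r : T => fun b : B =>
        f ⟨(b : Fin d → ℤ) + fun i => (r : Fin d → ℤ) i * k i,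
          hBRP b b.2 r (h r.2)⟩)}
    else Set.univ
    with hA'
  set S : Finset (Finset (Fin d → ℤ)) :=
    R.powerset.filter (fun T => T.card ≤ 2 ^ (m + 1)) with hS
  have hgood : goodPatchFns (n := n) m k B P R hBRP = ⋂ T ∈ S, A' T := by
    ext f
    simp only [goodPatchFns, Set.mem_setOf_eq, Set.mem_iInter]
    constructor
    · intro hf T hTS
      rw [hS, Finset.mem_filter, Finset.mem_powerset] at hTS
      rw [hA']
      simp only [dif_pos hTS.1]
      exact hf T hTS.1 hTS.2
    · intro hf T hT hcard
      have := hf T (by rw [hS, Finset.mem_filter, Finset.mem_powerset]; exact ⟨hT, hcard⟩)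
      rw [hA'] at this
      simpa only [dif_pos hT, Set.mem_setOf_eq] using this
  -- each A' T is open
  have hopen : ∀ T ∈ S, IsOpen (A' T) := by
    intro T hTS
    rw [hS, Finset.mem_filter, Finset.mem_powerset] at hTS
    rw [hA']
    simp only [dif_pos hTS.1]
    have hcont : Continuous (fun f : {x // x ∈ P} → Fin n → ℝ =>
        (fun r : T => fun b : B =>
          f ⟨(b : Fin d → ℤ) + fun i => (r : Fin d → ℤ) i * k i,
            hBRP b b.2 r (hTS.1 r.2)⟩)) :=
      continuous_pi fun r => continuous_pi fun b => continuous_apply _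
    exact isOpen_setOf_affineIndependent'.preimage hcont
  -- each A' T is dense
  have hdense : ∀ T ∈ S, Dense (A' T) := by
    intro T hTS
    rw [hS, Finset.mem_filter, Finset.mem_powerset] at hTS
    obtain ⟨hT, hcard⟩ := hTS
    -- the corner-restriction map
    set Θ : ({x // x ∈ P} → Fin n → ℝ) → (T → ({x // x ∈ Bs} → Fin n → ℝ)) :=
      fun f r b' => f ⟨(b' : Fin d → ℤ) + fun i => (r : Fin d → ℤ) i * k i,
        hBRP b' (hBsB b' b'.2) r (hT r.2)⟩ with hΘ
    have hsub : Θ ⁻¹' {p | AffineIndependent ℝ p} ⊆ A' T := by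
      intro f hf
      rw [hA']
      simp only [dif_pos hT, Set.mem_setOf_eq]
      set L : (({x // x ∈ B} → Fin n → ℝ)) →ₗ[ℝ] ({x // x ∈ Bs} → Fin n → ℝ) :=
        LinearMap.funLeft ℝ (Fin n → ℝ)
          (fun b' : {x // x ∈ Bs} => (⟨(b' : Fin d → ℤ), hBsB b' b'.2⟩ : {x // x ∈ B}))
      refine AffineIndependent.of_comp L.toAffineMap ?_
      have : (⇑L.toAffineMap ∘ fun r : T => fun b : B =>
          f ⟨(b : Fin d → ℤ) + fun i => (r : Fin d → ℤ) i * k i,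
            hBRP b b.2 r (hT r.2)⟩) = Θ f := rfl
      rw [this]
      exact hf
    refine Dense.mono hsub ?_
    -- density of the preimage
    have hD : Dense {p : T → ({x // x ∈ Bs} → Fin n → ℝ) | AffineIndependent ℝ p} := by
      refine dense_setOf_affineIndependent' ?_
      rw [hrankE', Fintype.card_coe]
      omega
    rw [Metric.dense_iff]
    intro f ε hε
    obtain ⟨q, hqball, hqD⟩ := (Metric.dense_iff.1 hD) (Θ f) ε hε
    rw [Metric.mem_ball] at hqball
    -- build the perturbed function
    set g : {x // x ∈ P} → Fin n → ℝ := fun x =>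
      if h : ∃ p : {r // r ∈ T} × {b // b ∈ Bs},
          ((p.2 : Fin d → ℤ) + fun i => (p.1 : Fin d → ℤ) i * k i) = (x : Fin d → ℤ) then
        q h.choose.1 h.choose.2
      else f x
      with hg
    have hΘg : Θ g = q := by
      funext r b'
      have hx : ∃ p : {r // r ∈ T} × {b // b ∈ Bs},
          ((p.2 : Fin d → ℤ) + fun i => (p.1 : Fin d → ℤ) i * k i)
            = (((b' : Fin d → ℤ) + fun i => (r : Fin d → ℤ) i * k i)) := ⟨⟨r, b'⟩, rfl⟩
      have : Θ g r b' = q hx.choose.1 hx.choose.2 := by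
        rw [hΘ, hg]
        simp only [dif_pos hx]
      rw [this]
      have hspec := hx.choose_spec
      obtain ⟨hbeq, hreq⟩ := inj _ hx.choose.2.2 _ b'.2 _ _ hspec
      have h1 : hx.choose.1 = r := Subtype.ext hreq
      have h2 : hx.choose.2 = b' := Subtype.ext hbeq
      rw [h1, h2]
    refine ⟨g, ?_, ?_⟩
    · rw [Metric.mem_ball]
      have hle : dist g f ≤ dist q (Θ f) := by
        rw [dist_pi_le_iff dist_nonneg]
        intro x
        rw [hg]
        by_cases h : ∃ p : {r // r ∈ T} × {b // b ∈ Bs},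
            ((p.2 : Fin d → ℤ) + fun i => (p.1 : Fin d → ℤ) i * k i) = (x : Fin d → ℤ)
        · simp only [dif_pos h]
          have hspec := h.choose_spec
          have hxeq : (⟨(h.choose.2 : Fin d → ℤ) + fun i => (h.choose.1 : Fin d → ℤ) i * k i,
              hBRP _ (hBsB _ h.choose.2.2) _ (hT h.choose.1.2)⟩ : {x // x ∈ P}) = x :=
            Subtype.ext hspec
          calc dist (q h.choose.1 h.choose.2) (f x)
              = dist (q h.choose.1 h.choose.2) (Θ f h.choose.1 h.choose.2) := by
                have hfx : Θ f h.choose.1 h.choose.2 = f x := congrArg f hxeq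
                rw [hfx]
            _ ≤ dist (q h.choose.1) (Θ f h.choose.1) := dist_le_pi_dist _ _ _
            _ ≤ dist q (Θ f) := dist_le_pi_dist _ _ _
        · simp only [dif_neg h, dist_self]
          exact dist_nonneg
      exact lt_of_le_of_lt hle hqball
    · rw [Set.mem_preimage, hΘg]
      exact hqD
  rw [hgood]
  have hdense' : ∀ (S' : Finset (Finset (Fin d → ℤ))), (∀ T ∈ S', IsOpen (A' T)) →
      (∀ T ∈ S', Dense (A' T)) → Dense (⋂ T ∈ S', A' T) := by
    intro S'
    refine Finset.induction_on S' ?_ ?_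
    · intro _ _
      simp only [Finset.notMem_empty, Set.iInter_of_empty, Set.iInter_univ]
      exact dense_univ
    · intro a s ha ih ho hde
      rw [Finset.set_biInter_insert]
      exact (hde a (Finset.mem_insert_self a s)).inter_of_isOpen_left
        (ih (fun T hT => ho T (Finset.mem_insert_of_mem hT))
            (fun T hT => hde T (Finset.mem_insert_of_mem hT)))
        (ho a (Finset.mem_insert_self a s))
  exact ⟨isOpen_biInter_finset hopen, hdense' S hopen hdense⟩
end

section
/- Let n ≥ 1 and d ≥ 1. The set of pairs (A, X), where A is an n × n real matrix and X is an n × d real matrix, such that the n rows of the product matrix A·X, viewed as a family of n points in ℝ^d, are in general position — i.e. for every subset s ⊆ Fin n with |s| ≤ d + 1 the corresponding subfamily of rows of A·X is affinely independent — is open and dense in the product space of pairs of matrices Matrix (Fin n) (Fin n) ℝ × Matrix (Fin n) (Fin d) ℝ with its natural (Euclidean) topology. (This is the genericity claim used in the paper's injectivity proposition for simplicial convolutional persistence.) -/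
/-!
Affine independence is an open condition, so general position is open. For density, points
can be chosen one at a time, each outside the affine span of the previous ones: that span is a
proper affine subspace and contains no nonempty open set. For pairs `(A, X)`, first move `A` to
an invertible matrix (`det (t • 1 + A)` is a monic polynomial in `t`, so it vanishes for only
finitely many `t`); then `X ↦ A * X` is a homeomorphism and density transfers.
-/

/-- The set of pairs `(A, X)` of an `n × n` matrix and an `n × d` matrix such
that the `n` rows of `A·X`, viewed as points of `ℝ^d`, are in general
position: every subfamily of at most `d + 1` rows is affinely independent. -/
def genPosRowPairs (n d : ℕ) :
    Set (Matrix (Fin n) (Fin n) ℝ × Matrix (Fin n) (Fin d) ℝ) :=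
  {q | ∀ s : Finset (Fin n), s.card ≤ d + 1 →
    AffineIndependent ℝ (fun i : s => (q.1 * q.2) (i : Fin n))}

open Finset Module

theorem AffineIndependent.insert_update_of_notMem_affineSpan {ι k V P : Type*} [DivisionRing k]
    [AddCommGroup V] [Module k V] [AddTorsor V P] [DecidableEq ι] {t : Finset ι} {a : ι}
    {p : ι → P} (hp : AffineIndependent k fun i : t => p i) {x : P}
    (hx : x ∉ affineSpan k (Set.range fun i : t => p i)) :
    AffineIndependent k fun i : (insert a t : Finset ι) => Function.update p a x i := by
  set a' : (insert a t : Finset ι) := ⟨a, mem_insert_self a t⟩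
  have hne (i : {i // i ≠ a'}) : (i : ι) ≠ a := fun h => i.2 (Subtype.ext h)
  let e : {i // i ≠ a'} ↪ t :=
    ⟨fun i => ⟨i, (mem_insert.1 i.1.2).resolve_left (hne i)⟩, fun i j h => by
      simp only [Subtype.mk.injEq] at h
      exact Subtype.ext (Subtype.ext h)⟩
  have hupdate (i : {i // i ≠ a'}) : Function.update p a x i = p (e i) :=
    Function.update_of_ne (hne i) x p
  refine AffineIndependent.affineIndependent_of_notMem_span (i := a') ?_ ?_
  · exact (funext hupdate).symm ▸ hp.comp_embedding e
  · refine fun hmem => hx (affineSpan_mono k ?_ (by simpa [a'] using hmem))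
    rintro _ ⟨i, hi, rfl⟩
    exact ⟨e ⟨i, hi⟩, (hupdate ⟨i, hi⟩).symm⟩

section GeneralPosition

variable {ι E : Type*} [NormedAddCommGroup E] [NormedSpace ℝ E]

theorem AffineIndependent.exists_mem_notMem_affineSpan [FiniteDimensional ℝ E] [Fintype ι]
    {p : ι → E} (hp : AffineIndependent ℝ p) (hcard : Fintype.card ι ≤ finrank ℝ E) {U : Set E}
    (hU : IsOpen U) (hne : U.Nonempty) : ∃ x ∈ U, x ∉ affineSpan ℝ (Set.range p) := by
  by_contra! hsub
  have htop : affineSpan ℝ (Set.range p) = ⊤ :=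
    top_unique <| hU.affineSpan_eq_top hne ▸ affineSpan_le.2 hsub
  have := hp.affineSpan_eq_top_iff_card_eq_finrank_add_one.1 htop
  omega

theorem dense_setOf_affineIndependent_restrict [FiniteDimensional ℝ E] (t : Finset ι)
    (ht : #t ≤ finrank ℝ E + 1) :
    Dense {p : ι → E | AffineIndependent ℝ fun i : t => p i} := by
  classical
  induction t using Finset.induction_on with
  | empty => exact dense_univ.mono fun p _ => affineIndependent_of_subsingleton ℝ _
  | insert a t ha ih =>
    rw [card_insert_of_notMem ha] at ht
    rw [dense_iff_inter_open]
    rintro U hU hUne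
    obtain ⟨p, hpU, hp⟩ := dense_iff_inter_open.1 (ih (by omega)) U hU hUne
    have hV : IsOpen {x | Function.update p a x ∈ U} :=
      hU.preimage (continuous_const.update a continuous_id)
    obtain ⟨x, hxV, hx⟩ := hp.exists_mem_notMem_affineSpan (by simpa using ht) hV
      ⟨p a, by simpa using hpU⟩
    exact ⟨_, hxV, hp.insert_update_of_notMem_affineSpan hx⟩

variable (E) in
def InGeneralPosition (p : ι → E) : Prop :=
  ∀ s : Finset ι, #s ≤ finrank ℝ E + 1 → AffineIndependent ℝ fun i : s => p i

theorem setOf_inGeneralPosition_eq_biInter :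
    {p : ι → E | InGeneralPosition E p} =
      ⋂ s ∈ {s : Finset ι | #s ≤ finrank ℝ E + 1}, {p | AffineIndependent ℝ fun i : s => p i} := by
  ext p
  simp [InGeneralPosition]

theorem isOpen_setOf_inGeneralPosition [FiniteDimensional ℝ E] [Finite ι] :
    IsOpen {p : ι → E | InGeneralPosition E p} := by
  rw [setOf_inGeneralPosition_eq_biInter]
  exact (Set.toFinite _).isOpen_biInter fun s _ =>
    isOpen_setOfPred_affineIndependent.preimage (by fun_prop)

theorem dense_setOf_inGeneralPosition [FiniteDimensional ℝ E] [Finite ι] :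
    Dense {p : ι → E | InGeneralPosition E p} := by
  rw [setOf_inGeneralPosition_eq_biInter]
  exact dense_biInter_of_isOpen
    (fun s _ => isOpen_setOfPred_affineIndependent.preimage (by fun_prop)) (Set.to_countable _)
    fun s hs => dense_setOf_affineIndependent_restrict s hs

end GeneralPosition

theorem Matrix.dense_setOf_det_ne_zero {m : Type*} [Fintype m] [DecidableEq m] :
    Dense {A : Matrix m m ℝ | A.det ≠ 0} := by
  intro A
  have hgood : Dense {t : ℝ | (-A).charpoly.eval t ≠ 0} :=
    (Polynomial.finite_setOfPred_isRoot (-A).charpoly_monic.ne_zero).countable.dense_compl ℝ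
  have hcont : Continuous fun t : ℝ => t • (1 : Matrix m m ℝ) + A := by fun_prop
  have hA := mem_closure_image (hcont.continuousAt (x := 0)) (hgood 0)
  rw [zero_smul, zero_add] at hA
  refine closure_mono ?_ hA
  rintro _ ⟨t, ht, rfl⟩
  simpa [Matrix.eval_charpoly, Matrix.smul_one_eq_diagonal] using ht

theorem Dense.setOf_mul_mem {m n : Type*} [Fintype m] [DecidableEq m] [Fintype n]
    {D : Set (Matrix m n ℝ)} (hD : Dense D) :
    Dense {q : Matrix m m ℝ × Matrix m n ℝ | q.1 * q.2 ∈ D} := by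
  refine dense_closure.1 <| (Matrix.dense_setOf_det_ne_zero.prod dense_univ).mono ?_
  rintro ⟨A, X⟩ ⟨hA, -⟩
  have hunit : IsUnit A.det := isUnit_iff_ne_zero.2 hA
  -- `M ↦ (A, A⁻¹ * M)` maps `D` into the set and `A * X` to `(A, X)`.
  have hcont : Continuous fun M : Matrix m n ℝ => (A, A⁻¹ * M) := by fun_prop
  have hAX := mem_closure_image (hcont.continuousAt (x := A * X)) (hD (A * X))
  rw [Matrix.nonsing_inv_mul_cancel_left A X hunit] at hAX
  refine closure_mono ?_ hAX
  rintro _ ⟨M, hM, rfl⟩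
  simpa [Matrix.mul_nonsing_inv_cancel_left A M hunit] using hM

theorem genPosRowPairs_eq_preimage_mul (n d : ℕ) :
    genPosRowPairs n d = (fun q => q.1 * q.2) ⁻¹'
      {M : Matrix (Fin n) (Fin d) ℝ | InGeneralPosition (Fin d → ℝ) M} := by
  simp [genPosRowPairs, InGeneralPosition]

theorem generic_rows_genpos_general {n d : ℕ} :
    IsOpen (genPosRowPairs n d) ∧ Dense (genPosRowPairs n d) := by
  have hopen : IsOpen {M : Matrix (Fin n) (Fin d) ℝ | InGeneralPosition (Fin d → ℝ) M} :=
    isOpen_setOf_inGeneralPosition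
  have hdense : Dense {M : Matrix (Fin n) (Fin d) ℝ | InGeneralPosition (Fin d → ℝ) M} :=
    dense_setOf_inGeneralPosition
  have hmul : Continuous fun q : Matrix (Fin n) (Fin n) ℝ × Matrix (Fin n) (Fin d) ℝ =>
      q.1 * q.2 :=
    continuous_fst.matrix_mul continuous_snd
  rw [genPosRowPairs_eq_preimage_mul]
  exact ⟨hopen.preimage hmul, hdense.setOf_mul_mem⟩

/-- For `n, d ≥ 1`, the set of pairs `(A, X)` such that the
rows of `A·X` are in general position in `ℝ^d` is open and dense in the
product space of pairs of matrices: it is a generic property of the matrices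
`A` and `X` that the rows of `A·X` are in general position. -/
theorem generic_rows_genpos {n d : ℕ} (hn : 1 ≤ n) (hd : 1 ≤ d) :
    IsOpen (genPosRowPairs n d) ∧ Dense (genPosRowPairs n d) :=
  generic_rows_genpos_general
end
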